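/- arXiv:1608.00088 — 4 statements merged into one kernel-verified Lean document; each statement's English description precedes it below -/
import Mathlib

section
/- Let x̄₁ and x̄₂ be sample means of independent iid samples of sizes n₁, n₂ from populations with means μ₁, μ₂ and covariances Σ₁, Σ₂, and let x₀ be a new observation independent of both samples with E[x₀] = μ₁ and Cov(x₀) = Σ₁. Then E[(x̄₁ − x̄₂)′x₀ − ½(x̄₁′x̄₁ − x̄₂′x̄₂)] = ½‖μ₁ − μ₂‖² − B, where B = tr(Σ₁)/(2n₁) − tr(Σ₂)/(2n₂). -/
/-! Expand both sides by bilinearity of `⬝ᵥ` and linearity of the integral. Every pair of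
distinct observations is independent and contributes only the product of its means; the
`n` diagonal terms `xₖ′xₖ` of `x̄′x̄` each contribute an extra `tr Σ`, which after the
factor `1/n²` leaves the bias `tr Σ / n`. -/

open MeasureTheory ProbabilityTheory Matrix

section DotProduct

variable {Ω ι : Type*} [MeasurableSpace Ω] {μ : Measure Ω} [Fintype ι]

lemma MeasureTheory.MemLp.integrable_dotProduct {X Y : Ω → ι → ℝ} (hX : MemLp X 2 μ)
    (hY : MemLp Y 2 μ) :
    Integrable (fun ω => X ω ⬝ᵥ Y ω) μ :=
  integrable_finsetSum _ fun i _ => (hX.eval i).integrable_mul (hY.eval i)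

lemma MeasureTheory.integral_dotProduct {X Y : Ω → ι → ℝ} (hX : MemLp X 2 μ)
    (hY : MemLp Y 2 μ) :
    ∫ ω, X ω ⬝ᵥ Y ω ∂μ = ∑ i, ∫ ω, X ω i * Y ω i ∂μ :=
  integral_finsetSum _ fun i _ => (hX.eval i).integrable_mul (hY.eval i)

namespace ProbabilityTheory

lemma IndepFun.integral_dotProduct_eq {X Y : Ω → ι → ℝ} {m m' : ι → ℝ}
    (h : IndepFun X Y μ) (hX : MemLp X 2 μ) (hY : MemLp Y 2 μ)
    (hmX : ∀ i, ∫ ω, X ω i ∂μ = m i) (hmY : ∀ i, ∫ ω, Y ω i ∂μ = m' i) :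
    ∫ ω, X ω ⬝ᵥ Y ω ∂μ = m ⬝ᵥ m' := by
  rw [integral_dotProduct hX hY]
  refine Finset.sum_congr rfl fun i _ => ?_
  rw [← hmX i, ← hmY i]
  exact (h.comp (measurable_pi_apply i) (measurable_pi_apply i)).integral_mul_eq_mul_integral
    (hX.eval i).aestronglyMeasurable (hY.eval i).aestronglyMeasurable

lemma integral_dotProduct_self_eq [IsProbabilityMeasure μ] {X : Ω → ι → ℝ} {m : ι → ℝ}
    {S : Matrix ι ι ℝ} (hX : MemLp X 2 μ) (hm : ∀ i, ∫ ω, X ω i ∂μ = m i)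
    (hS : ∀ i j, ∫ ω, (X ω i - m i) * (X ω j - m j) ∂μ = S i j) :
    ∫ ω, X ω ⬝ᵥ X ω ∂μ = m ⬝ᵥ m + S.trace := by
  rw [integral_dotProduct hX hX, dotProduct, trace, ← Finset.sum_add_distrib]
  refine Finset.sum_congr rfl fun i _ => ?_
  have hcov := covariance_eq_sub (hX.eval i) (hX.eval i)
  rw [covariance, hm i, hS i i] at hcov
  simp only [diag_apply, hcov, Pi.mul_apply]
  ring

section SampleMean

variable {n : ℕ} {X : Fin n → Ω → ι → ℝ}

lemma memLp_sampleMean (hX : ∀ k, MemLp (X k) 2 μ) :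
    MemLp (fun ω => (n : ℝ)⁻¹ • ∑ k, X k ω) 2 μ :=
  (memLp_finsetSum Finset.univ fun k _ => hX k).const_smul (n : ℝ)⁻¹

lemma integral_sampleMean_dotProduct {W : Ω → ι → ℝ} {m m' : ι → ℝ}
    (hn : 0 < n) (hX : ∀ k, MemLp (X k) 2 μ) (hW : MemLp W 2 μ)
    (hind : ∀ k, IndepFun (X k) W μ) (hmX : ∀ k i, ∫ ω, X k ω i ∂μ = m i)
    (hmW : ∀ i, ∫ ω, W ω i ∂μ = m' i) :
    ∫ ω, ((n : ℝ)⁻¹ • ∑ k, X k ω) ⬝ᵥ W ω ∂μ = m ⬝ᵥ m' := by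
  simp only [smul_dotProduct, sum_dotProduct, smul_eq_mul]
  rw [integral_const_mul,
    integral_finsetSum _ fun k _ => (hX k).integrable_dotProduct hW]
  simp only [fun k => (hind k).integral_dotProduct_eq (hX k) hW (hmX k) hmW,
    Finset.sum_const, Finset.card_univ, Fintype.card_fin, nsmul_eq_mul]
  field_simp

lemma integral_sampleMean_dotProduct_self [IsProbabilityMeasure μ] {m : ι → ℝ}
    {S : Matrix ι ι ℝ} (hn : 0 < n) (hX : ∀ k, MemLp (X k) 2 μ)
    (hind : ∀ k l, k ≠ l → IndepFun (X k) (X l) μ) (hm : ∀ k i, ∫ ω, X k ω i ∂μ = m i)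
    (hS : ∀ k i j, ∫ ω, (X k ω i - m i) * (X k ω j - m j) ∂μ = S i j) :
    ∫ ω, ((n : ℝ)⁻¹ • ∑ k, X k ω) ⬝ᵥ ((n : ℝ)⁻¹ • ∑ k, X k ω) ∂μ
      = m ⬝ᵥ m + S.trace / n := by
  have hpair : ∀ k l, ∫ ω, X k ω ⬝ᵥ X l ω ∂μ = m ⬝ᵥ m + if k = l then S.trace else 0 := by
    intro k l
    by_cases hkl : k = l
    · subst hkl
      simpa using integral_dotProduct_self_eq (hX k) (hm k) (hS k)
    · simpa [hkl] using (hind k l hkl).integral_dotProduct_eq (hX k) (hX l) (hm k) (hm l)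
  simp only [smul_dotProduct, dotProduct_smul, sum_dotProduct, dotProduct_sum, smul_eq_mul,
    ← Finset.mul_sum]
  rw [integral_const_mul, integral_const_mul, integral_finsetSum _ fun l _ =>
    integrable_finsetSum _ fun k _ => (hX k).integrable_dotProduct (hX l)]
  simp only [integral_finsetSum _ fun k _ => (hX k).integrable_dotProduct (hX _), hpair,
    Finset.sum_add_distrib, Finset.sum_ite_eq', Finset.mem_univ, if_true, Finset.sum_const,
    Finset.card_univ, Fintype.card_fin, nsmul_eq_mul]
  field_simp

end SampleMean

end ProbabilityTheory

end DotProduct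

theorem stmt0_general
    {Ω : Type*} [MeasureSpace Ω] [IsProbabilityMeasure (volume : Measure Ω)]
    (p n₁ n₂ : ℕ) (hn₁ : 0 < n₁) (hn₂ : 0 < n₂)
    (X1 : Fin n₁ → Ω → (Fin p → ℝ)) (X2 : Fin n₂ → Ω → (Fin p → ℝ))
    (x0 : Ω → (Fin p → ℝ))
    (μ1 μ2 : Fin p → ℝ) (S1 S2 : Matrix (Fin p) (Fin p) ℝ)
    (hindep : iIndepFun
      (Sum.elim X1 (Sum.elim X2 (fun _ : Unit => x0))) volume)
    (hL2_1 : ∀ k, MemLp (X1 k) 2) (hL2_2 : ∀ k, MemLp (X2 k) 2)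
    (hL2_0 : MemLp x0 2)
    (hmean1 : ∀ k s, ∫ ω, X1 k ω s = μ1 s)
    (hmean2 : ∀ k s, ∫ ω, X2 k ω s = μ2 s)
    (hmean0 : ∀ s, ∫ ω, x0 ω s = μ1 s)
    (hcov1 : ∀ k s t, ∫ ω, (X1 k ω s - μ1 s) * (X1 k ω t - μ1 t) = S1 s t)
    (hcov2 : ∀ k s t, ∫ ω, (X2 k ω s - μ2 s) * (X2 k ω t - μ2 t) = S2 s t) :
    (∫ ω, ((((n₁ : ℝ)⁻¹ • ∑ k, X1 k ω) - ((n₂ : ℝ)⁻¹ • ∑ l, X2 l ω)) ⬝ᵥ x0 ω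
        - (1/2) * ((((n₁ : ℝ)⁻¹ • ∑ k, X1 k ω) ⬝ᵥ ((n₁ : ℝ)⁻¹ • ∑ k, X1 k ω))
            - (((n₂ : ℝ)⁻¹ • ∑ l, X2 l ω) ⬝ᵥ ((n₂ : ℝ)⁻¹ • ∑ l, X2 l ω)))))
      = (1/2) * ((μ1 - μ2) ⬝ᵥ (μ1 - μ2))
        - (S1.trace / (2 * n₁) - S2.trace / (2 * n₂)) := by
  have hind10 : ∀ k, IndepFun (X1 k) x0 := fun k =>
    hindep.indepFun (i := .inl k) (j := .inr (.inr ())) (by simp)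
  have hind20 : ∀ l, IndepFun (X2 l) x0 := fun l =>
    hindep.indepFun (i := .inr (.inl l)) (j := .inr (.inr ())) (by simp)
  have hind11 : ∀ k l, k ≠ l → IndepFun (X1 k) (X1 l) := fun k l h =>
    hindep.indepFun (i := .inl k) (j := .inl l) (by simpa using h)
  have hind22 : ∀ k l, k ≠ l → IndepFun (X2 k) (X2 l) := fun k l h =>
    hindep.indepFun (i := .inr (.inl k)) (j := .inr (.inl l)) (by simpa using h)
  have hL2_bar1 := memLp_sampleMean hL2_1
  have hL2_bar2 := memLp_sampleMean hL2_2
  have hI1 := hL2_bar1.integrable_dotProduct hL2_0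
  have hI2 := hL2_bar2.integrable_dotProduct hL2_0
  have hI3 := hL2_bar1.integrable_dotProduct hL2_bar1
  have hI4 := hL2_bar2.integrable_dotProduct hL2_bar2
  simp only [sub_dotProduct]
  rw [integral_sub, integral_sub hI1 hI2, integral_const_mul, integral_sub hI3 hI4,
    integral_sampleMean_dotProduct hn₁ hL2_1 hL2_0 hind10 hmean1 hmean0,
    integral_sampleMean_dotProduct hn₂ hL2_2 hL2_0 hind20 hmean2 hmean0,
    integral_sampleMean_dotProduct_self hn₁ hL2_1 hind11 hmean1 hcov1,
    integral_sampleMean_dotProduct_self hn₂ hL2_2 hind22 hmean2 hcov2,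
    dotProduct_sub, dotProduct_sub, dotProduct_comm μ1 μ2]
  · ring
  · exact hI1.sub hI2
  · exact (hI3.sub hI4).const_mul _

/-- For two mutually independent iid samples with means `μ₁, μ₂` and covariances
`S₁, S₂`, and a new observation `x₀` independent of both with mean `μ₁` and
covariance `S₁`, the classifier `(x̄₁ − x̄₂)′x₀ − ½(x̄₁′x̄₁ − x̄₂′x̄₂)` has
expectation `½‖μ₁ − μ₂‖² − B` where `B = tr(S₁)/(2n₁) − tr(S₂)/(2n₂)`. -/
theorem stmt0
    {Ω : Type*} [MeasureSpace Ω] [IsProbabilityMeasure (volume : Measure Ω)]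
    (p n₁ n₂ : ℕ) (hn₁ : 0 < n₁) (hn₂ : 0 < n₂)
    (X1 : Fin n₁ → Ω → (Fin p → ℝ)) (X2 : Fin n₂ → Ω → (Fin p → ℝ))
    (x0 : Ω → (Fin p → ℝ))
    (μ1 μ2 : Fin p → ℝ) (S1 S2 : Matrix (Fin p) (Fin p) ℝ)
    (hmeas1 : ∀ k, Measurable (X1 k)) (hmeas2 : ∀ k, Measurable (X2 k))
    (hmeas0 : Measurable x0)
    (hindep : iIndepFun
      (Sum.elim X1 (Sum.elim X2 (fun _ : Unit => x0))) volume)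
    (hL2_1 : ∀ k, MemLp (X1 k) 2) (hL2_2 : ∀ k, MemLp (X2 k) 2)
    (hL2_0 : MemLp x0 2)
    (hmean1 : ∀ k s, ∫ ω, X1 k ω s = μ1 s)
    (hmean2 : ∀ k s, ∫ ω, X2 k ω s = μ2 s)
    (hmean0 : ∀ s, ∫ ω, x0 ω s = μ1 s)
    (hcov1 : ∀ k s t, ∫ ω, (X1 k ω s - μ1 s) * (X1 k ω t - μ1 t) = S1 s t)
    (hcov2 : ∀ k s t, ∫ ω, (X2 k ω s - μ2 s) * (X2 k ω t - μ2 t) = S2 s t)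
    (hcov0 : ∀ s t, ∫ ω, (x0 ω s - μ1 s) * (x0 ω t - μ1 t) = S1 s t) :
    (∫ ω, ((((n₁ : ℝ)⁻¹ • ∑ k, X1 k ω) - ((n₂ : ℝ)⁻¹ • ∑ l, X2 l ω)) ⬝ᵥ x0 ω
        - (1/2) * ((((n₁ : ℝ)⁻¹ • ∑ k, X1 k ω) ⬝ᵥ ((n₁ : ℝ)⁻¹ • ∑ k, X1 k ω))
            - (((n₂ : ℝ)⁻¹ • ∑ l, X2 l ω) ⬝ᵥ ((n₂ : ℝ)⁻¹ • ∑ l, X2 l ω)))))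
      = (1/2) * ((μ1 - μ2) ⬝ᵥ (μ1 - μ2))
        - (S1.trace / (2 * n₁) - S2.trace / (2 * n₂)) :=
  stmt0_general p n₁ n₂ hn₁ hn₂ X1 X2 x0 μ1 μ2 S1 S2 hindep hL2_1 hL2_2 hL2_0 hmean1 hmean2 hmean0
    hcov1 hcov2
end

section
/- Let A₀(x) = (1/p)(x̄₁ − x̄₂)′x₀ − ½(U_{n₁} − U_{n₂}), with U_{nᵢ} = (1/(p nᵢ(nᵢ−1))) Σ_{k≠r} x_{ik}′x_{ir}. If x₀ is independent of both samples with mean μ₁, then E[A₀(x)] = ‖μ₁ − μ₂‖²/(2p), with no bias term. -/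
open MeasureTheory ProbabilityTheory Matrix

/-!
By linearity, `E[A₀]` is a combination of expectations of inner products `X ⬝ᵥ Y` of independent
integrable vectors, and each of these is the inner product of the means. Both `x̄ᵢ′x₀` and the
U-statistics only involve such pairs (the diagonal `k = r`, which would bring in `tr Σᵢ`, is
excluded), so `E[x̄ᵢ′x₀] = μᵢ′μ₁` and `E[U_{nᵢ}] = μᵢ′μᵢ / p`, whence
`E[A₀] = (μ₁′μ₁ − μ₂′μ₁)/p − (μ₁′μ₁ − μ₂′μ₂)/(2p) = ‖μ₁ − μ₂‖²/(2p)`.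
-/

theorem Fintype.sum_sum_ite_ne_const {κ R : Type*} [Fintype κ] [DecidableEq κ] [Ring R] (c : R) :
    ∑ k : κ, ∑ r : κ, (if k ≠ r then c else 0) = Fintype.card κ * (Fintype.card κ - 1) * c := by
  have hrow : ∀ k : κ, ∑ r, (if k ≠ r then c else 0) = (Fintype.card κ - 1) * c := fun k => by
    have hcard : 1 ≤ Fintype.card κ := Fintype.card_pos_iff.2 ⟨k⟩
    simp [Finset.sum_ite, Finset.filter_ne, Finset.card_erase_of_mem, Nat.cast_sub hcard]
  simp only [hrow, Finset.sum_const, Finset.card_univ, nsmul_eq_mul, mul_assoc]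

namespace ProbabilityTheory

variable {Ω ι κ : Type*} {mΩ : MeasurableSpace Ω} {μ : Measure Ω}

section DotProduct

variable {f g : Ω → ι → ℝ}

lemma IndepFun.comp_eval (hfg : IndepFun f g μ) (i j : ι) :
    IndepFun (fun ω => f ω i) (fun ω => g ω j) μ :=
  hfg.comp (measurable_pi_apply i) (measurable_pi_apply j)

variable [Fintype ι]

lemma IndepFun.integrable_eval_mul_eval (hfg : IndepFun f g μ) (hf : Integrable f μ)
    (hg : Integrable g μ) (i : ι) : Integrable (fun ω => f ω i * g ω i) μ :=
  (hfg.comp_eval i i).integrable_mul (hf.eval i) (hg.eval i)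

lemma IndepFun.integrable_dotProduct (hfg : IndepFun f g μ) (hf : Integrable f μ)
    (hg : Integrable g μ) : Integrable (fun ω => f ω ⬝ᵥ g ω) μ :=
  integrable_finsetSum _ fun i _ => hfg.integrable_eval_mul_eval hf hg i

lemma IndepFun.integral_dotProduct (hfg : IndepFun f g μ) (hf : Integrable f μ)
    (hg : Integrable g μ) {m m' : ι → ℝ} (hm : ∀ i, ∫ ω, f ω i ∂μ = m i)
    (hm' : ∀ i, ∫ ω, g ω i ∂μ = m' i) :
    ∫ ω, f ω ⬝ᵥ g ω ∂μ = m ⬝ᵥ m' := by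
  simp only [dotProduct]
  rw [integral_finsetSum _ fun i _ => hfg.integrable_eval_mul_eval hf hg i]
  refine Finset.sum_congr rfl fun i _ => ?_
  rw [← hm, ← hm']
  exact (hfg.comp_eval i i).integral_mul_eq_mul_integral
    (hf.eval i).aestronglyMeasurable (hg.eval i).aestronglyMeasurable

end DotProduct

variable [Fintype ι] {X : κ → Ω → ι → ℝ} (hX : ∀ k, Integrable (X k) μ)
include hX

section OffDiagonal

variable [DecidableEq κ] (hind : Pairwise fun k r => IndepFun (X k) (X r) μ)
include hind

lemma integrable_ite_ne_dotProduct (k r : κ) :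
    Integrable (fun ω => if k ≠ r then X k ω ⬝ᵥ X r ω else 0) μ := by
  by_cases hkr : k = r
  · simp [hkr]
  · simpa [hkr] using (hind hkr).integrable_dotProduct (hX k) (hX r)

variable [Fintype κ]

lemma integrable_sum_offDiag_dotProduct :
    Integrable (fun ω => ∑ k, ∑ r, if k ≠ r then X k ω ⬝ᵥ X r ω else 0) μ :=
  integrable_finsetSum _ fun k _ => integrable_finsetSum _ fun r _ =>
    integrable_ite_ne_dotProduct hX hind k r

lemma integral_sum_offDiag_dotProduct {m : ι → ℝ} (hm : ∀ k i, ∫ ω, X k ω i ∂μ = m i) :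
    ∫ ω, (∑ k, ∑ r, if k ≠ r then X k ω ⬝ᵥ X r ω else 0) ∂μ
      = Fintype.card κ * (Fintype.card κ - 1) * (m ⬝ᵥ m) := by
  have hterm : ∀ k r, ∫ ω, (if k ≠ r then X k ω ⬝ᵥ X r ω else 0) ∂μ
      = if k ≠ r then m ⬝ᵥ m else 0 := by
    intro k r
    by_cases hkr : k = r
    · simp [hkr]
    · simpa [hkr] using (hind hkr).integral_dotProduct (hX k) (hX r) (hm k) (hm r)
  rw [integral_finsetSum _ fun k _ => integrable_finsetSum _ fun r _ =>
    integrable_ite_ne_dotProduct hX hind k r]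
  simp only [integral_finsetSum _ fun r _ => integrable_ite_ne_dotProduct hX hind _ r, hterm]
  exact Fintype.sum_sum_ite_ne_const _

end OffDiagonal

section SampleMean

variable [Fintype κ] {Y : Ω → ι → ℝ} (hY : Integrable Y μ) (hXY : ∀ k, IndepFun (X k) Y μ)
include hY hXY

lemma integrable_smul_sum_dotProduct (c : ℝ) :
    Integrable (fun ω => (c • ∑ k, X k ω) ⬝ᵥ Y ω) μ := by
  simp_rw [smul_dotProduct, sum_dotProduct, smul_eq_mul]
  exact (integrable_finsetSum _ fun k _ => (hXY k).integrable_dotProduct (hX k) hY).const_mul c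

lemma integral_sampleMean_dotProduct_s4 [Nonempty κ] {m m' : ι → ℝ}
    (hm : ∀ k i, ∫ ω, X k ω i ∂μ = m i) (hm' : ∀ i, ∫ ω, Y ω i ∂μ = m' i) :
    ∫ ω, ((Fintype.card κ : ℝ)⁻¹ • ∑ k, X k ω) ⬝ᵥ Y ω ∂μ = m ⬝ᵥ m' := by
  simp_rw [smul_dotProduct, sum_dotProduct, smul_eq_mul]
  rw [integral_const_mul, integral_finsetSum _ fun k _ => (hXY k).integrable_dotProduct (hX k) hY,
    Finset.sum_congr rfl fun k _ => (hXY k).integral_dotProduct (hX k) hY (hm k) hm',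
    Finset.sum_const, Finset.card_univ, nsmul_eq_mul,
    inv_mul_cancel_left₀ (by exact_mod_cast Fintype.card_ne_zero)]

end SampleMean

end ProbabilityTheory

theorem stmt4_general
    {Ω : Type*} [MeasureSpace Ω] [IsProbabilityMeasure (volume : Measure Ω)]
    (p n₁ n₂ : ℕ) (hn₁ : 2 ≤ n₁) (hn₂ : 2 ≤ n₂)
    (X1 : Fin n₁ → Ω → (Fin p → ℝ)) (X2 : Fin n₂ → Ω → (Fin p → ℝ))
    (x0 : Ω → (Fin p → ℝ)) (μ1 μ2 : Fin p → ℝ)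
    (hindep : iIndepFun
      (Sum.elim X1 (Sum.elim X2 (fun _ : Unit => x0))) volume)
    (hL2_1 : ∀ k, MemLp (X1 k) 2) (hL2_2 : ∀ k, MemLp (X2 k) 2)
    (hL2_0 : MemLp x0 2)
    (hmean1 : ∀ k s, ∫ ω, X1 k ω s = μ1 s)
    (hmean2 : ∀ k s, ∫ ω, X2 k ω s = μ2 s)
    (hmean0 : ∀ s, ∫ ω, x0 ω s = μ1 s) :
    ∫ ω,
      ((p : ℝ)⁻¹ * ((((n₁ : ℝ)⁻¹ • ∑ k, X1 k ω)
            - ((n₂ : ℝ)⁻¹ • ∑ l, X2 l ω)) ⬝ᵥ x0 ω)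
        - (1/2) *
          (((p : ℝ) * n₁ * ((n₁ : ℝ) - 1))⁻¹ *
              (∑ k, ∑ r, (if k ≠ r then X1 k ω ⬝ᵥ X1 r ω else 0))
            - ((p : ℝ) * n₂ * ((n₂ : ℝ) - 1))⁻¹ *
              (∑ k, ∑ r, (if k ≠ r then X2 k ω ⬝ᵥ X2 r ω else 0))))
      = ((μ1 - μ2) ⬝ᵥ (μ1 - μ2)) / (2 * p) := by
  have hX1 k := (hL2_1 k).integrable one_le_two
  have hX2 k := (hL2_2 k).integrable one_le_two
  have hx0 := hL2_0.integrable one_le_two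
  have hind1 : Pairwise fun k r => IndepFun (X1 k) (X1 r) := fun k r hkr =>
    hindep.indepFun (i := .inl k) (j := .inl r) (by simpa using hkr)
  have hind2 : Pairwise fun k r => IndepFun (X2 k) (X2 r) := fun k r hkr =>
    hindep.indepFun (i := .inr (.inl k)) (j := .inr (.inl r)) (by simpa using hkr)
  have hind10 k : IndepFun (X1 k) x0 :=
    hindep.indepFun (i := .inl k) (j := .inr (.inr ())) (by simp)
  have hind20 k : IndepFun (X2 k) x0 :=
    hindep.indepFun (i := .inr (.inl k)) (j := .inr (.inr ())) (by simp)
  have : NeZero n₁ := ⟨by omega⟩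
  have : NeZero n₂ := ⟨by omega⟩
  have hU1 := integral_sum_offDiag_dotProduct hX1 hind1 hmean1
  have hU2 := integral_sum_offDiag_dotProduct hX2 hind2 hmean2
  have hM1 := integral_sampleMean_dotProduct_s4 hX1 hx0 hind10 hmean1 hmean0
  have hM2 := integral_sampleMean_dotProduct_s4 hX2 hx0 hind20 hmean2 hmean0
  simp only [Fintype.card_fin] at hU1 hU2 hM1 hM2
  have hS1 := integrable_sum_offDiag_dotProduct hX1 hind1
  have hS2 := integrable_sum_offDiag_dotProduct hX2 hind2
  have hT1 := integrable_smul_sum_dotProduct hX1 hx0 hind10 (n₁ : ℝ)⁻¹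
  have hT2 := integrable_smul_sum_dotProduct hX2 hx0 hind20 (n₂ : ℝ)⁻¹
  simp_rw [sub_dotProduct]
  rw [integral_sub (by fun_prop) (by fun_prop),
    integral_const_mul, integral_const_mul, integral_sub hT1 hT2,
    integral_sub (by fun_prop) (by fun_prop), integral_const_mul, integral_const_mul,
    hM1, hM2, hU1, hU2]
  have h1 : (n₁ : ℝ) - 1 ≠ 0 := sub_ne_zero.2 (by exact_mod_cast (by omega : n₁ ≠ 1))
  have h2 : (n₂ : ℝ) - 1 ≠ 0 := sub_ne_zero.2 (by exact_mod_cast (by omega : n₂ ≠ 1))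
  field_simp
  simp only [dotProduct_sub, dotProduct_comm μ2 μ1]
  ring

/-- For `A₀(x) = (1/p)(x̄₁ − x̄₂)′x₀ − ½(U_{n₁} − U_{n₂})` with
`U_{nᵢ} = (1/(p nᵢ(nᵢ−1))) Σ_{k≠r} x_{ik}′x_{ir}`, if `x₀` is independent of
both samples with mean `μ₁`, then `E[A₀(x)] = ‖μ₁ − μ₂‖²/(2p)`. -/
theorem stmt4
    {Ω : Type*} [MeasureSpace Ω] [IsProbabilityMeasure (volume : Measure Ω)]
    (p n₁ n₂ : ℕ) (hp : 0 < p) (hn₁ : 2 ≤ n₁) (hn₂ : 2 ≤ n₂)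
    (X1 : Fin n₁ → Ω → (Fin p → ℝ)) (X2 : Fin n₂ → Ω → (Fin p → ℝ))
    (x0 : Ω → (Fin p → ℝ)) (μ1 μ2 : Fin p → ℝ)
    (hmeas1 : ∀ k, Measurable (X1 k)) (hmeas2 : ∀ k, Measurable (X2 k))
    (hmeas0 : Measurable x0)
    (hindep : iIndepFun
      (Sum.elim X1 (Sum.elim X2 (fun _ : Unit => x0))) volume)
    (hL2_1 : ∀ k, MemLp (X1 k) 2) (hL2_2 : ∀ k, MemLp (X2 k) 2)
    (hL2_0 : MemLp x0 2)
    (hmean1 : ∀ k s, ∫ ω, X1 k ω s = μ1 s)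
    (hmean2 : ∀ k s, ∫ ω, X2 k ω s = μ2 s)
    (hmean0 : ∀ s, ∫ ω, x0 ω s = μ1 s) :
    ∫ ω,
      ((p : ℝ)⁻¹ * ((((n₁ : ℝ)⁻¹ • ∑ k, X1 k ω)
            - ((n₂ : ℝ)⁻¹ • ∑ l, X2 l ω)) ⬝ᵥ x0 ω)
        - (1/2) *
          (((p : ℝ) * n₁ * ((n₁ : ℝ) - 1))⁻¹ *
              (∑ k, ∑ r, (if k ≠ r then X1 k ω ⬝ᵥ X1 r ω else 0))
            - ((p : ℝ) * n₂ * ((n₂ : ℝ) - 1))⁻¹ *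
              (∑ k, ∑ r, (if k ≠ r then X2 k ω ⬝ᵥ X2 r ω else 0))))
      = ((μ1 - μ2) ⬝ᵥ (μ1 - μ2)) / (2 * p) :=
  stmt4_general p n₁ n₂ hn₁ hn₂ X1 X2 x0 μ1 μ2 hindep hL2_1 hL2_2 hL2_0 hmean1 hmean2 hmean0
end

section
/- Let x₀ be independent of the two independent samples with E[x₀] = μ₁, Cov(x₀) = Σ₁. Then Var[x₀′(x̄₁ − x̄₂)] = tr(Σ₁²)/n₁ + tr(Σ₁Σ₂)/n₂ + μ₁′Σ₁μ₁/n₁ + μ₁′Σ₂μ₁/n₂ + (μ₁ − μ₂)′Σ₁(μ₁ − μ₂). -/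
/-!
Write `x̄₁ − x̄₂ = ∑ᵢ aᵢ • Wᵢ` as one linear combination of the pooled samples `W = (X1, X2)`,
with `aᵢ = 1/n₁` on the first sample and `aᵢ = −1/n₂` on the second.
Pairwise independence makes covariance additive, so this vector has mean `μ₁ − μ₂` and
covariance `Σ₁/n₁ + Σ₂/n₂`. Since `x₀` is independent of it, the variance of the dot product
follows from the general formula for independent random vectors `x`, `z`:
`Var(x ⬝ z) = tr(Σₓ Σ_z) + mₓ′ Σ_z mₓ + m_z′ Σₓ m_z`, which comes from expanding `x ⬝ z`
bilinearly and factorising each `E[xₛ zₛ xₜ zₜ] = E[xₛ xₜ] E[zₛ zₜ]`.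
-/

open MeasureTheory ProbabilityTheory Matrix

namespace ProbabilityTheory

variable {Ω ι : Type*} {mΩ : MeasurableSpace Ω} {μ : Measure Ω}

noncomputable def meanVec (X : Ω → ι → ℝ) (μ : Measure Ω) : ι → ℝ :=
  fun s ↦ ∫ ω, X ω s ∂μ

noncomputable def covMatrix (X : Ω → ι → ℝ) (μ : Measure Ω) : Matrix ι ι ℝ :=
  Matrix.of fun s t ↦ cov[fun ω ↦ X ω s, fun ω ↦ X ω t; μ]

lemma meanVec_eq {X : Ω → ι → ℝ} {m : ι → ℝ} (hm : ∀ s, ∫ ω, X ω s ∂μ = m s) :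
    meanVec X μ = m :=
  funext hm

lemma covMatrix_eq {X : Ω → ι → ℝ} {m : ι → ℝ} {S : Matrix ι ι ℝ}
    (hm : ∀ s, ∫ ω, X ω s ∂μ = m s)
    (hS : ∀ s t, ∫ ω, (X ω s - m s) * (X ω t - m t) ∂μ = S s t) :
    covMatrix X μ = S := by
  ext s t
  simp only [covMatrix, of_apply, covariance, hm, hS]

lemma covMatrix_transpose (X : Ω → ι → ℝ) (μ : Measure Ω) :
    (covMatrix X μ)ᵀ = covMatrix X μ := by
  ext s t
  exact covariance_comm _ _

lemma integral_mul_eq_covariance_add [IsProbabilityMeasure μ] {X Y : Ω → ℝ}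
    (hX : MemLp X 2 μ) (hY : MemLp Y 2 μ) :
    ∫ ω, X ω * Y ω ∂μ = cov[X, Y; μ] + μ[X] * μ[Y] := by
  rw [covariance_eq_sub hX hY]
  simp

lemma IndepFun.eval {κ : Type*} {x : Ω → ι → ℝ} {z : Ω → κ → ℝ} (h : IndepFun x z μ)
    (s : ι) (t : κ) : IndepFun (fun ω ↦ x ω s) (fun ω ↦ z ω t) μ :=
  h.comp (measurable_pi_apply s) (measurable_pi_apply t)

lemma IndepFun.memLp_two_mul {X Y : Ω → ℝ} (h : IndepFun X Y μ)
    (hX : MemLp X 2 μ) (hY : MemLp Y 2 μ) : MemLp (fun ω ↦ X ω * Y ω) 2 μ := by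
  refine (memLp_two_iff_integrable_sq (hX.1.mul hY.1)).2 ?_
  have hsq : IndepFun (fun ω ↦ X ω ^ 2) (fun ω ↦ Y ω ^ 2) μ :=
    h.comp (measurable_id.pow_const 2) (measurable_id.pow_const 2)
  convert hsq.integrable_mul hX.integrable_sq hY.integrable_sq using 1
  ext ω
  exact mul_pow (X ω) (Y ω) 2

lemma iIndepFun.indepFun_sumElim {κ β : Type*} [Fintype ι] [Fintype κ] [MeasurableSpace β]
    {f : ι → Ω → β} {g : κ → Ω → β} (h : iIndepFun (Sum.elim f g) μ)
    (hf : ∀ i, AEMeasurable (f i) μ) (hg : ∀ k, AEMeasurable (g k) μ) :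
    IndepFun (fun ω i ↦ f i ω) (fun ω k ↦ g k ω) μ := by
  have hST : Disjoint (Finset.univ.map (.inl : ι ↪ ι ⊕ κ)) (Finset.univ.map .inr) := by
    simp [Finset.disjoint_left]
  have hfg : ∀ j, AEMeasurable (Sum.elim f g j) μ := Sum.rec hf hg
  exact (h.indepFun_finset₀ _ _ hST hfg).comp
    (measurable_pi_lambda _ fun i ↦ measurable_pi_apply ⟨.inl i, by simp⟩)
    (measurable_pi_lambda _ fun k ↦ measurable_pi_apply ⟨.inr k, by simp⟩)

lemma iIndepFun.sumElim_assoc {κ ν β : Type*} [MeasurableSpace β] {f : ι → Ω → β}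
    {g : κ → Ω → β} {h : ν → Ω → β} (hfgh : iIndepFun (Sum.elim f (Sum.elim g h)) μ) :
    iIndepFun (Sum.elim (Sum.elim f g) h) μ := by
  convert hfgh.precomp (Equiv.sumAssoc ι κ ν).injective using 1
  funext i
  rcases i with (_ | _) | _ <;> rfl

section DotProduct

variable [Fintype ι] {x z : Ω → ι → ℝ}

lemma IndepFun.memLp_two_dotProduct (h : IndepFun x z μ) (hx : MemLp x 2 μ) (hz : MemLp z 2 μ) :
    MemLp (fun ω ↦ x ω ⬝ᵥ z ω) 2 μ :=
  memLp_finsetSum _ fun s _ ↦ (h.eval s s).memLp_two_mul (hx.eval s) (hz.eval s)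

variable [IsProbabilityMeasure μ]

lemma IndepFun.covariance_mul_mul (h : IndepFun x z μ) (hx : MemLp x 2 μ) (hz : MemLp z 2 μ)
    (s t : ι) :
    cov[fun ω ↦ x ω s * z ω s, fun ω ↦ x ω t * z ω t; μ]
      = covMatrix x μ s t * covMatrix z μ s t
        + covMatrix x μ s t * (meanVec z μ s * meanVec z μ t)
        + meanVec x μ s * meanVec x μ t * covMatrix z μ s t := by
  have hmean : ∀ u, ∫ ω, x ω u * z ω u ∂μ = meanVec x μ u * meanVec z μ u := fun u ↦
    (h.eval u u).integral_fun_mul_eq_mul_integral (hx.eval u).1 (hz.eval u).1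
  have hmoment : ∫ ω, (x ω s * z ω s) * (x ω t * z ω t) ∂μ
      = (∫ ω, x ω s * x ω t ∂μ) * ∫ ω, z ω s * z ω t ∂μ := by
    simp_rw [mul_mul_mul_comm (x _ s)]
    exact h.integral_fun_comp_mul_comp (f := fun v ↦ v s * v t) (g := fun v ↦ v s * v t)
      hx.1.aemeasurable hz.1.aemeasurable (by fun_prop) (by fun_prop)
  rw [covariance_eq_sub ((h.eval s s).memLp_two_mul (hx.eval s) (hz.eval s))
    ((h.eval t t).memLp_two_mul (hx.eval t) (hz.eval t))]
  simp only [Pi.mul_apply]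
  rw [hmoment, hmean, hmean, integral_mul_eq_covariance_add (hx.eval s) (hx.eval t),
    integral_mul_eq_covariance_add (hz.eval s) (hz.eval t)]
  simp only [covMatrix, meanVec, of_apply]
  ring

theorem IndepFun.variance_dotProduct (h : IndepFun x z μ) (hx : MemLp x 2 μ) (hz : MemLp z 2 μ) :
    Var[fun ω ↦ x ω ⬝ᵥ z ω; μ]
      = (covMatrix x μ * covMatrix z μ).trace + meanVec x μ ⬝ᵥ (covMatrix z μ *ᵥ meanVec x μ)
        + meanVec z μ ⬝ᵥ (covMatrix x μ *ᵥ meanVec z μ) := by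
  have hprod : ∀ s, MemLp (fun ω ↦ x ω s * z ω s) 2 μ := fun s ↦
    (h.eval s s).memLp_two_mul (hx.eval s) (hz.eval s)
  have hsymm : ∀ s t, covMatrix z μ t s = covMatrix z μ s t := fun s t ↦
    congrFun₂ (covMatrix_transpose z μ) s t
  rw [← covariance_self (h.memLp_two_dotProduct hx hz).aemeasurable]
  simp only [dotProduct]
  rw [covariance_fun_sum_fun_sum hprod hprod]
  simp_rw [h.covariance_mul_mul hx hz]
  simp only [trace, diag, mul_apply, mulVec, dotProduct, Finset.mul_sum, Finset.sum_add_distrib,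
    hsymm]
  rw [add_right_comm]
  congr 1
  · congr 1
    exact Finset.sum_congr rfl fun _ _ ↦ Finset.sum_congr rfl fun _ _ ↦ by ring
  · exact Finset.sum_congr rfl fun _ _ ↦ Finset.sum_congr rfl fun _ _ ↦ by ring

end DotProduct

section LinearCombination

variable [Fintype ι] {κ : Type*} [Fintype κ] {W : κ → Ω → ι → ℝ} (a : κ → ℝ)

lemma meanVec_sum_smul (hW : ∀ k, Integrable (W k) μ) :
    meanVec (fun ω ↦ ∑ k, a k • W k ω) μ = ∑ k, a k • meanVec (W k) μ := by
  ext s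
  simp only [meanVec, Finset.sum_apply, Pi.smul_apply, smul_eq_mul]
  rw [integral_finsetSum _ fun k _ ↦ ((hW k).eval s).const_mul (a k)]
  simp_rw [integral_const_mul]

lemma covMatrix_sum_smul [IsFiniteMeasure μ] (hW : ∀ k, MemLp (W k) 2 μ)
    (hindep : Pairwise fun k l ↦ IndepFun (W k) (W l) μ) :
    covMatrix (fun ω ↦ ∑ k, a k • W k ω) μ = ∑ k, a k ^ 2 • covMatrix (W k) μ := by
  ext s t
  simp only [covMatrix, of_apply, Finset.sum_apply, Pi.smul_apply, smul_eq_mul, Matrix.sum_apply,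
    Matrix.smul_apply]
  rw [covariance_fun_sum_fun_sum (fun k ↦ ((hW k).eval s).const_mul (a k))
    (fun k ↦ ((hW k).eval t).const_mul (a k))]
  simp_rw [covariance_const_mul_left, covariance_const_mul_right]
  refine Finset.sum_congr rfl fun k _ ↦ ?_
  rw [Finset.sum_eq_single k]
  · ring
  · intro l _ hlk
    rw [((hindep hlk.symm).eval s t).covariance_eq_zero ((hW k).eval s) ((hW l).eval t)]
    ring
  · simp

end LinearCombination

section SampleMeanDiff

variable {n₁ n₂ : ℕ} {X1 : Fin n₁ → Ω → ι → ℝ} {X2 : Fin n₂ → Ω → ι → ℝ}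

noncomputable def sampleMeanDiff (X1 : Fin n₁ → Ω → ι → ℝ) (X2 : Fin n₂ → Ω → ι → ℝ) :
    Ω → ι → ℝ :=
  fun ω ↦ (n₁ : ℝ)⁻¹ • ∑ k, X1 k ω - (n₂ : ℝ)⁻¹ • ∑ l, X2 l ω

lemma sampleMeanDiff_eq_sum_smul (X1 : Fin n₁ → Ω → ι → ℝ) (X2 : Fin n₂ → Ω → ι → ℝ) :
    sampleMeanDiff X1 X2 = fun ω ↦
      ∑ i, Sum.elim (fun _ ↦ (n₁ : ℝ)⁻¹) (fun _ ↦ -(n₂ : ℝ)⁻¹) i • Sum.elim X1 X2 i ω := by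
  ext ω
  simp [sampleMeanDiff, Fintype.sum_sum_type, Finset.smul_sum, sub_eq_add_neg]

lemma IndepFun.sampleMeanDiff_left {γ : Type*} [MeasurableSpace γ] {Y : Ω → γ}
    (h : IndepFun (fun ω i ↦ Sum.elim X1 X2 i ω) Y μ) : IndepFun (sampleMeanDiff X1 X2) Y μ :=
  h.comp (by fun_prop : Measurable fun v : Fin n₁ ⊕ Fin n₂ → ι → ℝ ↦
    (n₁ : ℝ)⁻¹ • ∑ k, v (.inl k) - (n₂ : ℝ)⁻¹ • ∑ l, v (.inr l)) measurable_id

variable [Fintype ι]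

lemma memLp_sampleMeanDiff (hX1 : ∀ k, MemLp (X1 k) 2 μ) (hX2 : ∀ l, MemLp (X2 l) 2 μ) :
    MemLp (sampleMeanDiff X1 X2) 2 μ := by
  have hX : ∀ i, MemLp (Sum.elim X1 X2 i) 2 μ := Sum.rec hX1 hX2
  rw [sampleMeanDiff_eq_sum_smul]
  exact memLp_finsetSum _ fun i _ ↦
    (hX i).const_smul (Sum.elim (fun _ ↦ (n₁ : ℝ)⁻¹) (fun _ ↦ -(n₂ : ℝ)⁻¹) i)

lemma meanVec_sampleMeanDiff {m₁ m₂ : ι → ℝ} (hn₁ : n₁ ≠ 0) (hn₂ : n₂ ≠ 0)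
    (hX1 : ∀ k, Integrable (X1 k) μ) (hX2 : ∀ l, Integrable (X2 l) μ)
    (hm₁ : ∀ k, meanVec (X1 k) μ = m₁) (hm₂ : ∀ l, meanVec (X2 l) μ = m₂) :
    meanVec (sampleMeanDiff X1 X2) μ = m₁ - m₂ := by
  rw [sampleMeanDiff_eq_sum_smul, meanVec_sum_smul _ (Sum.rec hX1 hX2)]
  simp only [Fintype.sum_sum_type, Sum.elim_inl, Sum.elim_inr, hm₁, hm₂, Finset.sum_const,
    Finset.card_univ, Fintype.card_fin, ← Nat.cast_smul_eq_nsmul ℝ, smul_smul]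
  rw [mul_neg, mul_inv_cancel₀ (Nat.cast_ne_zero.2 hn₁), mul_inv_cancel₀ (Nat.cast_ne_zero.2 hn₂),
    neg_smul, one_smul, one_smul, sub_eq_add_neg]

lemma covMatrix_sampleMeanDiff [IsFiniteMeasure μ] {C₁ C₂ : Matrix ι ι ℝ}
    (hX1 : ∀ k, MemLp (X1 k) 2 μ) (hX2 : ∀ l, MemLp (X2 l) 2 μ)
    (hindep : Pairwise fun i j ↦ IndepFun (Sum.elim X1 X2 i) (Sum.elim X1 X2 j) μ)
    (hC₁ : ∀ k, covMatrix (X1 k) μ = C₁) (hC₂ : ∀ l, covMatrix (X2 l) μ = C₂) :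
    covMatrix (sampleMeanDiff X1 X2) μ = (n₁ : ℝ)⁻¹ • C₁ + (n₂ : ℝ)⁻¹ • C₂ := by
  rw [sampleMeanDiff_eq_sum_smul, covMatrix_sum_smul _ (Sum.rec hX1 hX2) hindep]
  simp only [Fintype.sum_sum_type, Sum.elim_inl, Sum.elim_inr, hC₁, hC₂, Finset.sum_const,
    Finset.card_univ, Fintype.card_fin, ← Nat.cast_smul_eq_nsmul ℝ, smul_smul]
  congr 2 <;> field_simp

end SampleMeanDiff

end ProbabilityTheory

theorem stmt6_general
    {Ω : Type*} [MeasureSpace Ω] [IsProbabilityMeasure (volume : Measure Ω)]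
    (p n₁ n₂ : ℕ) (hn₁ : 0 < n₁) (hn₂ : 0 < n₂)
    (X1 : Fin n₁ → Ω → (Fin p → ℝ)) (X2 : Fin n₂ → Ω → (Fin p → ℝ))
    (x0 : Ω → (Fin p → ℝ))
    (μ1 μ2 : Fin p → ℝ) (S1 S2 : Matrix (Fin p) (Fin p) ℝ)
    (hindep : iIndepFun
      (Sum.elim X1 (Sum.elim X2 (fun _ : Unit => x0))) volume)
    (hL2_1 : ∀ k, MemLp (X1 k) 2) (hL2_2 : ∀ k, MemLp (X2 k) 2)
    (hL2_0 : MemLp x0 2)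
    (hmean1 : ∀ k s, ∫ ω, X1 k ω s = μ1 s)
    (hmean2 : ∀ k s, ∫ ω, X2 k ω s = μ2 s)
    (hmean0 : ∀ s, ∫ ω, x0 ω s = μ1 s)
    (hcov1 : ∀ k s t, ∫ ω, (X1 k ω s - μ1 s) * (X1 k ω t - μ1 t) = S1 s t)
    (hcov2 : ∀ k s t, ∫ ω, (X2 k ω s - μ2 s) * (X2 k ω t - μ2 t) = S2 s t)
    (hcov0 : ∀ s t, ∫ ω, (x0 ω s - μ1 s) * (x0 ω t - μ1 t) = S1 s t) :
    ∫ ω,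
      (x0 ω ⬝ᵥ (((n₁ : ℝ)⁻¹ • ∑ k, X1 k ω) - ((n₂ : ℝ)⁻¹ • ∑ l, X2 l ω))
        - ∫ ω', x0 ω' ⬝ᵥ (((n₁ : ℝ)⁻¹ • ∑ k, X1 k ω')
            - ((n₂ : ℝ)⁻¹ • ∑ l, X2 l ω')))^2
      = (S1 * S1).trace / n₁ + (S1 * S2).trace / n₂
        + (μ1 ⬝ᵥ (S1 *ᵥ μ1)) / n₁ + (μ1 ⬝ᵥ (S2 *ᵥ μ1)) / n₂
        + (μ1 - μ2) ⬝ᵥ (S1 *ᵥ (μ1 - μ2)) := by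
  have hindep' := hindep.sumElim_assoc
  have hsamples : ∀ i, MemLp (Sum.elim X1 X2 i) 2 := Sum.rec hL2_1 hL2_2
  have hx0 : IndepFun x0 (sampleMeanDiff X1 X2) :=
    ((hindep'.indepFun_sumElim (fun i ↦ (hsamples i).1.aemeasurable)
      fun _ ↦ hL2_0.1.aemeasurable).sampleMeanDiff_left).symm.comp
      (measurable_pi_apply ()) measurable_id
  have hpairwise : Pairwise fun i j ↦ IndepFun (Sum.elim X1 X2 i) (Sum.elim X1 X2 j) :=
    fun i j hij ↦ (hindep'.precomp Sum.inl_injective).indepFun hij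
  have hZ := memLp_sampleMeanDiff hL2_1 hL2_2
  refine (variance_eq_integral (hx0.memLp_two_dotProduct hL2_0 hZ).aemeasurable).symm.trans ?_
  rw [hx0.variance_dotProduct hL2_0 hZ, meanVec_eq hmean0, covMatrix_eq hmean0 hcov0,
    meanVec_sampleMeanDiff hn₁.ne' hn₂.ne' (fun k ↦ (hL2_1 k).integrable one_le_two)
      (fun l ↦ (hL2_2 l).integrable one_le_two) (fun k ↦ meanVec_eq (hmean1 k))
      (fun l ↦ meanVec_eq (hmean2 l)),
    covMatrix_sampleMeanDiff hL2_1 hL2_2 hpairwise (fun k ↦ covMatrix_eq (hmean1 k) (hcov1 k))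
      (fun l ↦ covMatrix_eq (hmean2 l) (hcov2 l))]
  simp only [Matrix.mul_add, Matrix.mul_smul, trace_add, trace_smul, smul_eq_mul, add_mulVec,
    smul_mulVec, dotProduct_add, dotProduct_smul, div_eq_inv_mul]
  ring

/-- With `x₀` independent of the two independent samples, `E[x₀] = μ₁`,
`Cov(x₀) = S₁`, the variance of `x₀′(x̄₁ − x̄₂)` equals
`tr(S₁²)/n₁ + tr(S₁S₂)/n₂ + μ₁′S₁μ₁/n₁ + μ₁′S₂μ₁/n₂ + (μ₁−μ₂)′S₁(μ₁−μ₂)`. -/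
theorem stmt6
    {Ω : Type*} [MeasureSpace Ω] [IsProbabilityMeasure (volume : Measure Ω)]
    (p n₁ n₂ : ℕ) (hn₁ : 0 < n₁) (hn₂ : 0 < n₂)
    (X1 : Fin n₁ → Ω → (Fin p → ℝ)) (X2 : Fin n₂ → Ω → (Fin p → ℝ))
    (x0 : Ω → (Fin p → ℝ))
    (μ1 μ2 : Fin p → ℝ) (S1 S2 : Matrix (Fin p) (Fin p) ℝ)
    (hmeas1 : ∀ k, Measurable (X1 k)) (hmeas2 : ∀ k, Measurable (X2 k))
    (hmeas0 : Measurable x0)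
    (hindep : iIndepFun
      (Sum.elim X1 (Sum.elim X2 (fun _ : Unit => x0))) volume)
    (hL2_1 : ∀ k, MemLp (X1 k) 2) (hL2_2 : ∀ k, MemLp (X2 k) 2)
    (hL2_0 : MemLp x0 2)
    (hmean1 : ∀ k s, ∫ ω, X1 k ω s = μ1 s)
    (hmean2 : ∀ k s, ∫ ω, X2 k ω s = μ2 s)
    (hmean0 : ∀ s, ∫ ω, x0 ω s = μ1 s)
    (hcov1 : ∀ k s t, ∫ ω, (X1 k ω s - μ1 s) * (X1 k ω t - μ1 t) = S1 s t)
    (hcov2 : ∀ k s t, ∫ ω, (X2 k ω s - μ2 s) * (X2 k ω t - μ2 t) = S2 s t)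
    (hcov0 : ∀ s t, ∫ ω, (x0 ω s - μ1 s) * (x0 ω t - μ1 t) = S1 s t) :
    ∫ ω,
      (x0 ω ⬝ᵥ (((n₁ : ℝ)⁻¹ • ∑ k, X1 k ω) - ((n₂ : ℝ)⁻¹ • ∑ l, X2 l ω))
        - ∫ ω', x0 ω' ⬝ᵥ (((n₁ : ℝ)⁻¹ • ∑ k, X1 k ω')
            - ((n₂ : ℝ)⁻¹ • ∑ l, X2 l ω')))^2
      = (S1 * S1).trace / n₁ + (S1 * S2).trace / n₂
        + (μ1 ⬝ᵥ (S1 *ᵥ μ1)) / n₁ + (μ1 ⬝ᵥ (S2 *ᵥ μ1)) / n₂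
        + (μ1 - μ2) ⬝ᵥ (S1 *ᵥ (μ1 - μ2)) :=
  stmt6_general p n₁ n₂ hn₁ hn₂ X1 X2 x0 μ1 μ2 S1 S2 hindep hL2_1 hL2_2 hL2_0 hmean1 hmean2 hmean0
    hcov1 hcov2 hcov0
end

section
/- With U_{nᵢ} and U_{n₁n₂} as above, Cov(U_{n₁}, U_{n₁n₂}) = 2μ₂′Σ₁μ₁/n₁ and Cov(U_{n₁}, U_{n₂}) = 0. -/
open MeasureTheory ProbabilityTheory Matrix

section Aux
set_option linter.unusedSectionVars false
variable {Ω : Type*} [MeasureSpace Ω] [IsProbabilityMeasure (volume : Measure Ω)]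

/-- Product of two L² real functions is integrable. -/
lemma aux_mul_int {f g : Ω → ℝ} (hf : MemLp f 2) (hg : MemLp g 2) :
    Integrable (fun ω => f ω * g ω) := by
  have h : MemLp (g • f) 1 := hf.smul hg
  have := memLp_one_iff_integrable.mp h
  exact this.congr (ae_of_all _ fun ω => by simp [mul_comm])

/-- Coordinate of an L² random vector is L². -/
lemma aux_coord {p : ℕ} {X : Ω → Fin p → ℝ} (hX : MemLp X 2) (s : Fin p) :
    MemLp (fun ω => X ω s) 2 := by
  have := (ContinuousLinearMap.proj (R := ℝ) (φ := fun _ : Fin p => ℝ) s).comp_memLp' hX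
  exact this

variable {ι β : Type*} [MeasurableSpace β] {f : ι → Ω → β}

lemma aux_pair (hindep : iIndepFun f volume)
    {i j : ι} (hij : i ≠ j) {φ ψ : β → ℝ}
    (hiφ : Integrable (fun ω => φ (f i ω))) (hiψ : Integrable (fun ω => ψ (f j ω)))
    (hφ : Measurable φ) (hψ : Measurable ψ) :
    ∫ ω, φ (f i ω) * ψ (f j ω) = (∫ ω, φ (f i ω)) * ∫ ω, ψ (f j ω) :=
  ((hindep.indepFun hij).comp hφ hψ).integral_mul_eq_mul_integral hiφ.aestronglyMeasurable hiψ.aestronglyMeasurable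

lemma aux_triple_int (hindep : iIndepFun f volume)
    (hmeas : ∀ i, Measurable (f i))
    {i j k : ι} (hij : i ≠ j) (hik : i ≠ k) (hjk : j ≠ k) {φ ψ χ : β → ℝ}
    (hφ : Measurable φ) (hψ : Measurable ψ) (hχ : Measurable χ)
    (hiφ : Integrable (fun ω => φ (f i ω))) (hiψ : Integrable (fun ω => ψ (f j ω)))
    (hiχ : Integrable (fun ω => χ (f k ω))) :
    Integrable (fun ω => φ (f i ω) * ψ (f j ω) * χ (f k ω)) := by
  have h12 : IndepFun (fun ω => φ (f i ω)) (fun ω => ψ (f j ω)) volume :=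
    (hindep.indepFun hij).comp hφ hψ
  have h3 : IndepFun (fun ω => φ (f i ω) * ψ (f j ω)) (fun ω => χ (f k ω)) volume :=
    (hindep.indepFun_prodMk hmeas i j k hik hjk).comp
      ((hφ.comp measurable_fst).mul (hψ.comp measurable_snd)) hχ
  exact h3.integrable_mul (h12.integrable_mul hiφ hiψ) hiχ

lemma aux_triple (hindep : iIndepFun f volume)
    (hmeas : ∀ i, Measurable (f i))
    {i j k : ι} (hij : i ≠ j) (hik : i ≠ k) (hjk : j ≠ k) {φ ψ χ : β → ℝ}
    (hφ : Measurable φ) (hψ : Measurable ψ) (hχ : Measurable χ)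
    (hiφ : Integrable (fun ω => φ (f i ω))) (hiψ : Integrable (fun ω => ψ (f j ω)))
    (hiχ : Integrable (fun ω => χ (f k ω))) :
    ∫ ω, φ (f i ω) * ψ (f j ω) * χ (f k ω)
      = (∫ ω, φ (f i ω)) * (∫ ω, ψ (f j ω)) * ∫ ω, χ (f k ω) := by
  have h12 : IndepFun (fun ω => φ (f i ω)) (fun ω => ψ (f j ω)) volume :=
    (hindep.indepFun hij).comp hφ hψ
  have h3 : IndepFun (fun ω => φ (f i ω) * ψ (f j ω)) (fun ω => χ (f k ω)) volume :=
    (hindep.indepFun_prodMk hmeas i j k hik hjk).comp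
      ((hφ.comp measurable_fst).mul (hψ.comp measurable_snd)) hχ
  have := h3.integral_mul_eq_mul_integral (h12.integrable_mul hiφ hiψ).aestronglyMeasurable hiχ.aestronglyMeasurable
  rw [show ((fun ω => φ (f i ω) * ψ (f j ω)) * fun ω => χ (f k ω))
      = fun ω => φ (f i ω) * ψ (f j ω) * χ (f k ω) from rfl] at this
  rw [this, aux_pair hindep hij hiφ hiψ hφ hψ]

lemma aux_quad_int (hindep : iIndepFun f volume)
    (hmeas : ∀ i, Measurable (f i))
    {i j k l : ι} (hij : i ≠ j) (hik : i ≠ k) (hil : i ≠ l) (hjk : j ≠ k) (hjl : j ≠ l)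
    {φ ψ χ θ : β → ℝ}
    (hφ : Measurable φ) (hψ : Measurable ψ) (hχ : Measurable χ) (hθ : Measurable θ)
    (hiφ : Integrable (fun ω => φ (f i ω))) (hiψ : Integrable (fun ω => ψ (f j ω)))
    (hiχθ : Integrable (fun ω => χ (f k ω) * θ (f l ω))) :
    Integrable (fun ω => φ (f i ω) * ψ (f j ω) * (χ (f k ω) * θ (f l ω))) := by
  have h12 : IndepFun (fun ω => φ (f i ω)) (fun ω => ψ (f j ω)) volume :=
    (hindep.indepFun hij).comp hφ hψ
  have hbig : IndepFun (fun ω => φ (f i ω) * ψ (f j ω)) (fun ω => χ (f k ω) * θ (f l ω)) volume :=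
    (hindep.indepFun_prodMk_prodMk hmeas i j k l hik hil hjk hjl).comp
      ((hφ.comp measurable_fst).mul (hψ.comp measurable_snd))
      ((hχ.comp measurable_fst).mul (hθ.comp measurable_snd))
  exact hbig.integrable_mul (h12.integrable_mul hiφ hiψ) hiχθ

lemma aux_quad (hindep : iIndepFun f volume)
    (hmeas : ∀ i, Measurable (f i))
    {i j k l : ι} (hij : i ≠ j) (hik : i ≠ k) (hil : i ≠ l) (hjk : j ≠ k) (hjl : j ≠ l)
    (hkl : k ≠ l) {φ ψ χ θ : β → ℝ}
    (hφ : Measurable φ) (hψ : Measurable ψ) (hχ : Measurable χ) (hθ : Measurable θ)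
    (hiφ : Integrable (fun ω => φ (f i ω))) (hiψ : Integrable (fun ω => ψ (f j ω)))
    (hiχ : Integrable (fun ω => χ (f k ω))) (hiθ : Integrable (fun ω => θ (f l ω))) :
    ∫ ω, φ (f i ω) * ψ (f j ω) * (χ (f k ω) * θ (f l ω))
      = (∫ ω, φ (f i ω)) * (∫ ω, ψ (f j ω)) * ((∫ ω, χ (f k ω)) * ∫ ω, θ (f l ω)) := by
  have h12 : IndepFun (fun ω => φ (f i ω)) (fun ω => ψ (f j ω)) volume :=
    (hindep.indepFun hij).comp hφ hψ
  have h34 : IndepFun (fun ω => χ (f k ω)) (fun ω => θ (f l ω)) volume :=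
    (hindep.indepFun hkl).comp hχ hθ
  have hbig : IndepFun (fun ω => φ (f i ω) * ψ (f j ω)) (fun ω => χ (f k ω) * θ (f l ω)) volume :=
    (hindep.indepFun_prodMk_prodMk hmeas i j k l hik hil hjk hjl).comp
      ((hφ.comp measurable_fst).mul (hψ.comp measurable_snd))
      ((hχ.comp measurable_fst).mul (hθ.comp measurable_snd))
  have := hbig.integral_mul_eq_mul_integral (h12.integrable_mul hiφ hiψ).aestronglyMeasurable
    (h34.integrable_mul hiχ hiθ).aestronglyMeasurable
  rw [show ((fun ω => φ (f i ω) * ψ (f j ω)) * fun ω => χ (f k ω) * θ (f l ω))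
      = fun ω => φ (f i ω) * ψ (f j ω) * (χ (f k ω) * θ (f l ω)) from rfl] at this
  rw [this, aux_pair hindep hij hiφ hiψ hφ hψ, aux_pair hindep hkl hiχ hiθ hχ hθ]

/-- counting: `∑_{k≠r} d = (N²-N) d`. -/
lemma aux_count (N : ℕ) (d : ℝ) :
    (∑ k : Fin N, ∑ r : Fin N, if k ≠ r then d else 0) = ((N : ℝ) ^ 2 - N) * d := by
  have h : ∀ k : Fin N, (∑ r : Fin N, if k ≠ r then d else 0) = N * d - d := by
    intro k
    have hk : ∀ r : Fin N, (if k ≠ r then d else 0) = d - (if k = r then d else 0) := by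
      intro r; by_cases h : k = r <;> simp [h]
    rw [Finset.sum_congr rfl (fun r _ => hk r), Finset.sum_sub_distrib]
    simp [Finset.card_univ, mul_comm]
  rw [Finset.sum_congr rfl (fun k _ => h k)]
  simp [Finset.card_univ]; ring

end Aux
section Aux2
variable {Ω : Type*} [MeasureSpace Ω] [IsProbabilityMeasure (volume : Measure Ω)]

lemma aux_cov {A B : Ω → ℝ} (hA : Integrable A) (hB : Integrable B)
    (hAB : Integrable (fun ω => A ω * B ω)) (c d : ℝ) :
    ∫ ω, (c * A ω - ∫ ω', c * A ω') * (d * B ω - ∫ ω', d * B ω')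
      = c * d * ((∫ ω, A ω * B ω) - (∫ ω, A ω) * ∫ ω, B ω) := by
  rw [integral_const_mul c A, integral_const_mul d B]
  have key : ∫ ω, (c * A ω - c * ∫ ω', A ω') * (d * B ω - d * ∫ ω', B ω')
      = ∫ ω, ((c*d) * (A ω * B ω) - ((c*d) * ∫ ω', A ω') * B ω
          - ((c*d) * ∫ ω', B ω') * A ω + ((c*d) * ∫ ω', A ω') * ∫ ω', B ω') :=
    integral_congr_ae (ae_of_all _ fun ω => by ring)
  have i1 : Integrable (fun ω => (c*d) * (A ω * B ω) - ((c*d) * ∫ ω', A ω') * B ω) :=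
    (hAB.const_mul _).sub (hB.const_mul _)
  have i2 : Integrable (fun ω => (c*d) * (A ω * B ω) - ((c*d) * ∫ ω', A ω') * B ω
      - ((c*d) * ∫ ω', B ω') * A ω) := i1.sub (hA.const_mul _)
  rw [key, integral_add i2 (integrable_const _), integral_sub i1 (hA.const_mul _),
    integral_sub (hAB.const_mul _) (hB.const_mul _),
    integral_const_mul, integral_const_mul, integral_const_mul, integral_const]
  simp [measure_univ]
  ring
end Aux2


/-- With `U_{n₁} = (1/(n₁(n₁−1))) Σ_{k≠r} x_{1k}′x_{1r}`,
`U_{n₂} = (1/(n₂(n₂−1))) Σ_{k≠r} x_{2k}′x_{2r}` and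
`U_{n₁n₂} = (1/(n₁n₂)) Σ_{k,l} x_{1k}′x_{2l}` for two independent iid samples,
`Cov(U_{n₁}, U_{n₁n₂}) = 2μ₂′S₁μ₁/n₁` and `Cov(U_{n₁}, U_{n₂}) = 0`. -/
theorem stmt9
    {Ω : Type*} [MeasureSpace Ω] [IsProbabilityMeasure (volume : Measure Ω)]
    (p n₁ n₂ : ℕ) (hn₁ : 2 ≤ n₁) (hn₂ : 2 ≤ n₂)
    (X1 : Fin n₁ → Ω → (Fin p → ℝ)) (X2 : Fin n₂ → Ω → (Fin p → ℝ))
    (μ1 μ2 : Fin p → ℝ) (S1 S2 : Matrix (Fin p) (Fin p) ℝ)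
    (hmeas1 : ∀ k, Measurable (X1 k)) (hmeas2 : ∀ k, Measurable (X2 k))
    (hindep : iIndepFun (Sum.elim X1 X2) volume)
    (hL2_1 : ∀ k, MemLp (X1 k) 2) (hL2_2 : ∀ k, MemLp (X2 k) 2)
    (hmean1 : ∀ k s, ∫ ω, X1 k ω s = μ1 s)
    (hmean2 : ∀ k s, ∫ ω, X2 k ω s = μ2 s)
    (hcov1 : ∀ k s t, ∫ ω, (X1 k ω s - μ1 s) * (X1 k ω t - μ1 t) = S1 s t)
    (hcov2 : ∀ k s t, ∫ ω, (X2 k ω s - μ2 s) * (X2 k ω t - μ2 t) = S2 s t) :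
    (∫ ω,
      (((n₁ : ℝ) * ((n₁ : ℝ) - 1))⁻¹ *
          (∑ k, ∑ r, (if k ≠ r then X1 k ω ⬝ᵥ X1 r ω else 0))
        - ∫ ω', ((n₁ : ℝ) * ((n₁ : ℝ) - 1))⁻¹ *
            (∑ k, ∑ r, (if k ≠ r then X1 k ω' ⬝ᵥ X1 r ω' else 0))) *
      (((n₁ : ℝ) * n₂)⁻¹ * (∑ k, ∑ l, X1 k ω ⬝ᵥ X2 l ω)
        - ∫ ω', ((n₁ : ℝ) * n₂)⁻¹ * (∑ k, ∑ l, X1 k ω' ⬝ᵥ X2 l ω'))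
      = 2 * (μ2 ⬝ᵥ (S1 *ᵥ μ1)) / n₁)
    ∧ (∫ ω,
      (((n₁ : ℝ) * ((n₁ : ℝ) - 1))⁻¹ *
          (∑ k, ∑ r, (if k ≠ r then X1 k ω ⬝ᵥ X1 r ω else 0))
        - ∫ ω', ((n₁ : ℝ) * ((n₁ : ℝ) - 1))⁻¹ *
            (∑ k, ∑ r, (if k ≠ r then X1 k ω' ⬝ᵥ X1 r ω' else 0))) *
      (((n₂ : ℝ) * ((n₂ : ℝ) - 1))⁻¹ *
          (∑ k, ∑ r, (if k ≠ r then X2 k ω ⬝ᵥ X2 r ω else 0))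
        - ∫ ω', ((n₂ : ℝ) * ((n₂ : ℝ) - 1))⁻¹ *
            (∑ k, ∑ r, (if k ≠ r then X2 k ω' ⬝ᵥ X2 r ω' else 0)))
      = 0) := by
  classical
  have hmW : ∀ i : Fin n₁ ⊕ Fin n₂, Measurable (Sum.elim X1 X2 i) := by
    rintro (a | a); exacts [hmeas1 a, hmeas2 a]
  have c1L : ∀ k s, MemLp (fun ω => X1 k ω s) 2 := fun k s => aux_coord (hL2_1 k) s
  have c2L : ∀ l t, MemLp (fun ω => X2 l ω t) 2 := fun l t => aux_coord (hL2_2 l) t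
  have c1I : ∀ k s, Integrable (fun ω => X1 k ω s) := fun k s => (c1L k s).integrable one_le_two
  have c2I : ∀ l t, Integrable (fun ω => X2 l ω t) := fun l t => (c2L l t).integrable one_le_two
  have m11 : ∀ k r s t, Integrable (fun ω => X1 k ω s * X1 r ω t) :=
    fun k r s t => aux_mul_int (c1L k s) (c1L r t)
  have m12 : ∀ (k : Fin n₁) (l : Fin n₂) s t, Integrable (fun ω => X1 k ω s * X2 l ω t) :=
    fun k l s t => aux_mul_int (c1L k s) (c2L l t)
  have m22 : ∀ l l' s t, Integrable (fun ω => X2 l ω s * X2 l' ω t) :=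
    fun l l' s t => aux_mul_int (c2L l s) (c2L l' t)
  -- second moments
  have sm1 : ∀ k s t, ∫ ω, X1 k ω s * X1 k ω t = S1 s t + μ1 s * μ1 t := by
    intro k s t
    have h := hcov1 k s t
    have hexp : ∫ ω, (X1 k ω s - μ1 s) * (X1 k ω t - μ1 t)
        = ∫ ω, (X1 k ω s * X1 k ω t - μ1 t * X1 k ω s - μ1 s * X1 k ω t + μ1 s * μ1 t) :=
      integral_congr_ae (ae_of_all _ fun ω => by ring)
    have j1 : Integrable (fun ω => X1 k ω s * X1 k ω t - μ1 t * X1 k ω s) :=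
      (m11 k k s t).sub ((c1I k s).const_mul _)
    have j2 : Integrable (fun ω => X1 k ω s * X1 k ω t - μ1 t * X1 k ω s - μ1 s * X1 k ω t) :=
      j1.sub ((c1I k t).const_mul _)
    rw [hexp, integral_add j2 (integrable_const _), integral_sub j1 ((c1I k t).const_mul _),
      integral_sub (m11 k k s t) ((c1I k s).const_mul _), integral_const_mul, integral_const_mul,
      hmean1 k s, hmean1 k t, integral_const] at h
    simp [measure_univ] at h
    linarith
  -- pair expectations
  have p11 : ∀ {k r : Fin n₁}, k ≠ r → ∀ s t, ∫ ω, X1 k ω s * X1 r ω t = μ1 s * μ1 t := by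
    intro k r hkr s t
    have h : ∫ ω, X1 k ω s * X1 r ω t = (∫ ω, X1 k ω s) * ∫ ω, X1 r ω t :=
      aux_pair (f := Sum.elim X1 X2) hindep (i := Sum.inl k) (j := Sum.inl r)
        (by simpa using hkr) (φ := fun a => a s) (ψ := fun a => a t)
        (c1I k s) (c1I r t) (measurable_pi_apply s) (measurable_pi_apply t)
    rw [h, hmean1 k s, hmean1 r t]
  have p12 : ∀ (k : Fin n₁) (l : Fin n₂) s t, ∫ ω, X1 k ω s * X2 l ω t = μ1 s * μ2 t := by
    intro k l s t
    have h : ∫ ω, X1 k ω s * X2 l ω t = (∫ ω, X1 k ω s) * ∫ ω, X2 l ω t :=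
      aux_pair (f := Sum.elim X1 X2) hindep (i := Sum.inl k) (j := Sum.inr l)
        (by simp) (φ := fun a => a s) (ψ := fun a => a t)
        (c1I k s) (c2I l t) (measurable_pi_apply s) (measurable_pi_apply t)
    rw [h, hmean1 k s, hmean2 l t]
  have p22 : ∀ {l l' : Fin n₂}, l ≠ l' → ∀ s t, ∫ ω, X2 l ω s * X2 l' ω t = μ2 s * μ2 t := by
    intro l l' hll s t
    have h : ∫ ω, X2 l ω s * X2 l' ω t = (∫ ω, X2 l ω s) * ∫ ω, X2 l' ω t :=
      aux_pair (f := Sum.elim X1 X2) hindep (i := Sum.inr l) (j := Sum.inr l')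
        (by simpa using hll) (φ := fun a => a s) (ψ := fun a => a t)
        (c2I l s) (c2I l' t) (measurable_pi_apply s) (measurable_pi_apply t)
    rw [h, hmean2 l s, hmean2 l' t]
  -- integrability of dot products
  have iDot11 : ∀ k r, Integrable (fun ω => X1 k ω ⬝ᵥ X1 r ω) := by
    intro k r; simp only [dotProduct]
    exact integrable_finset_sum _ fun s _ => m11 k r s s
  have iDot12 : ∀ (k : Fin n₁) (l : Fin n₂), Integrable (fun ω => X1 k ω ⬝ᵥ X2 l ω) := by
    intro k l; simp only [dotProduct]
    exact integrable_finset_sum _ fun s _ => m12 k l s s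
  have iDot22 : ∀ l l', Integrable (fun ω => X2 l ω ⬝ᵥ X2 l' ω) := by
    intro l l'; simp only [dotProduct]
    exact integrable_finset_sum _ fun s _ => m22 l l' s s
  have iIte11 : ∀ k r : Fin n₁, Integrable (fun ω => if k ≠ r then X1 k ω ⬝ᵥ X1 r ω else 0) := by
    intro k r; by_cases h : k ≠ r
    · simpa [h] using iDot11 k r
    · simpa [h] using integrable_const (0 : ℝ)
  have iIte22 : ∀ l l' : Fin n₂, Integrable (fun ω => if l ≠ l' then X2 l ω ⬝ᵥ X2 l' ω else 0) := by
    intro l l'; by_cases h : l ≠ l'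
    · simpa [h] using iDot22 l l'
    · simpa [h] using integrable_const (0 : ℝ)
  have hA : Integrable (fun ω => ∑ k, ∑ r, if k ≠ r then X1 k ω ⬝ᵥ X1 r ω else 0) :=
    integrable_finset_sum _ fun k _ => integrable_finset_sum _ fun r _ => iIte11 k r
  have hB : Integrable (fun ω => ∑ k, ∑ l, X1 k ω ⬝ᵥ X2 l ω) :=
    integrable_finset_sum _ fun k _ => integrable_finset_sum _ fun l _ => iDot12 k l
  have hC : Integrable (fun ω => ∑ k, ∑ r, if k ≠ r then X2 k ω ⬝ᵥ X2 r ω else 0) :=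
    integrable_finset_sum _ fun k _ => integrable_finset_sum _ fun r _ => iIte22 k r
  -- first moments of the U-statistics
  have hval11 : ∀ (k r : Fin n₁),
      ∫ ω, (if k ≠ r then X1 k ω ⬝ᵥ X1 r ω else 0) = if k ≠ r then μ1 ⬝ᵥ μ1 else 0 := by
    intro k r; by_cases h : k ≠ r
    · simp only [if_pos h]
      simp only [dotProduct]
      rw [integral_finset_sum _ fun s _ => m11 k r s s]
      exact Finset.sum_congr rfl fun s _ => p11 h s s
    · simp [h]
  have EA : ∫ ω, (∑ k, ∑ r, if k ≠ r then X1 k ω ⬝ᵥ X1 r ω else 0)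
      = ((n₁ : ℝ) ^ 2 - n₁) * (μ1 ⬝ᵥ μ1) := by
    rw [integral_finset_sum _ fun k _ => integrable_finset_sum _ fun r _ => iIte11 k r,
      Finset.sum_congr rfl fun k _ => integral_finset_sum _ fun r _ => iIte11 k r,
      Finset.sum_congr rfl fun k _ => Finset.sum_congr rfl fun r _ => hval11 k r]
    exact aux_count n₁ _
  have EB : ∫ ω, (∑ k, ∑ l, X1 k ω ⬝ᵥ X2 l ω) = ((n₁ : ℝ) * n₂) * (μ1 ⬝ᵥ μ2) := by
    have hval : ∀ (k : Fin n₁) (l : Fin n₂), ∫ ω, X1 k ω ⬝ᵥ X2 l ω = μ1 ⬝ᵥ μ2 := by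
      intro k l; simp only [dotProduct]
      rw [integral_finset_sum _ fun s _ => m12 k l s s]
      exact Finset.sum_congr rfl fun s _ => p12 k l s s
    rw [integral_finset_sum _ fun k _ => integrable_finset_sum _ fun l _ => iDot12 k l,
      Finset.sum_congr rfl fun k _ => integral_finset_sum _ fun l _ => iDot12 k l,
      Finset.sum_congr rfl fun k _ => Finset.sum_congr rfl fun l _ => hval k l]
    simp [Finset.card_univ, mul_assoc]
  -- fourth-order integrability
  have int4 : ∀ (k r m : Fin n₁) (l : Fin n₂) (s t : Fin p), k ≠ r →
      Integrable (fun ω => X1 k ω s * X1 r ω s * (X1 m ω t * X2 l ω t)) := by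
    intro k r m l s t hkr
    by_cases hmk : m = k
    · subst hmk
      have h : Integrable (fun ω => (X1 m ω s * X1 m ω t) * X1 r ω s * X2 l ω t) :=
        aux_triple_int (f := Sum.elim X1 X2) hindep hmW
          (i := Sum.inl m) (j := Sum.inl r) (k := Sum.inr l)
          (by simpa using hkr) (by simp) (by simp)
          (φ := fun a => a s * a t) (ψ := fun a => a s) (χ := fun a => a t)
          ((measurable_pi_apply s).mul (measurable_pi_apply t)) (measurable_pi_apply s)
          (measurable_pi_apply t) (m11 m m s t) (c1I r s) (c2I l t)
      exact h.congr (ae_of_all _ fun ω => by ring)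
    · by_cases hmr : m = r
      · subst hmr
        have h : Integrable (fun ω => (X1 m ω s * X1 m ω t) * X1 k ω s * X2 l ω t) :=
          aux_triple_int (f := Sum.elim X1 X2) hindep hmW
            (i := Sum.inl m) (j := Sum.inl k) (k := Sum.inr l)
            (by simpa using fun h => hkr h.symm) (by simp) (by simp)
            (φ := fun a => a s * a t) (ψ := fun a => a s) (χ := fun a => a t)
            ((measurable_pi_apply s).mul (measurable_pi_apply t)) (measurable_pi_apply s)
            (measurable_pi_apply t) (m11 m m s t) (c1I k s) (c2I l t)
        exact h.congr (ae_of_all _ fun ω => by ring)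
      · exact aux_quad_int (f := Sum.elim X1 X2) hindep hmW
          (i := Sum.inl k) (j := Sum.inl r) (k := Sum.inl m) (l := Sum.inr l)
          (by simpa using hkr) (by simpa using fun h => hmk h.symm) (by simp)
          (by simpa using fun h => hmr h.symm) (by simp)
          (φ := fun a => a s) (ψ := fun a => a s) (χ := fun a => a t) (θ := fun a => a t)
          (measurable_pi_apply s) (measurable_pi_apply s) (measurable_pi_apply t)
          (measurable_pi_apply t) (c1I k s) (c1I r s) (m12 m l t t)
  -- fourth-order expectations
  have val4 : ∀ (k r m : Fin n₁) (l : Fin n₂) (s t : Fin p), k ≠ r →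
      ∫ ω, X1 k ω s * X1 r ω s * (X1 m ω t * X2 l ω t)
        = (if m = k ∨ m = r then S1 s t * (μ1 s * μ2 t) else 0)
          + μ1 s * μ1 s * (μ1 t * μ2 t) := by
    intro k r m l s t hkr
    by_cases hmk : m = k
    · subst hmk
      have step : ∫ ω, X1 m ω s * X1 r ω s * (X1 m ω t * X2 l ω t)
          = ∫ ω, (X1 m ω s * X1 m ω t) * X1 r ω s * X2 l ω t :=
        integral_congr_ae (ae_of_all _ fun ω => by ring)
      have h : ∫ ω, (X1 m ω s * X1 m ω t) * X1 r ω s * X2 l ω t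
          = (∫ ω, X1 m ω s * X1 m ω t) * (∫ ω, X1 r ω s) * ∫ ω, X2 l ω t :=
        aux_triple (f := Sum.elim X1 X2) hindep hmW
          (i := Sum.inl m) (j := Sum.inl r) (k := Sum.inr l)
          (by simpa using hkr) (by simp) (by simp)
          (φ := fun a => a s * a t) (ψ := fun a => a s) (χ := fun a => a t)
          ((measurable_pi_apply s).mul (measurable_pi_apply t)) (measurable_pi_apply s)
          (measurable_pi_apply t) (m11 m m s t) (c1I r s) (c2I l t)
      rw [step, h, sm1 m s t, hmean1 r s, hmean2 l t, if_pos (Or.inl rfl)]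
      ring
    · by_cases hmr : m = r
      · subst hmr
        have step : ∫ ω, X1 k ω s * X1 m ω s * (X1 m ω t * X2 l ω t)
            = ∫ ω, (X1 m ω s * X1 m ω t) * X1 k ω s * X2 l ω t :=
          integral_congr_ae (ae_of_all _ fun ω => by ring)
        have h : ∫ ω, (X1 m ω s * X1 m ω t) * X1 k ω s * X2 l ω t
            = (∫ ω, X1 m ω s * X1 m ω t) * (∫ ω, X1 k ω s) * ∫ ω, X2 l ω t :=
          aux_triple (f := Sum.elim X1 X2) hindep hmW
            (i := Sum.inl m) (j := Sum.inl k) (k := Sum.inr l)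
            (by simpa using fun h => hkr h.symm) (by simp) (by simp)
            (φ := fun a => a s * a t) (ψ := fun a => a s) (χ := fun a => a t)
            ((measurable_pi_apply s).mul (measurable_pi_apply t)) (measurable_pi_apply s)
            (measurable_pi_apply t) (m11 m m s t) (c1I k s) (c2I l t)
        rw [step, h, sm1 m s t, hmean1 k s, hmean2 l t, if_pos (Or.inr rfl)]
        ring
      · have h : ∫ ω, X1 k ω s * X1 r ω s * (X1 m ω t * X2 l ω t)
            = (∫ ω, X1 k ω s) * (∫ ω, X1 r ω s) * ((∫ ω, X1 m ω t) * ∫ ω, X2 l ω t) :=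
          aux_quad (f := Sum.elim X1 X2) hindep hmW
            (i := Sum.inl k) (j := Sum.inl r) (k := Sum.inl m) (l := Sum.inr l)
            (by simpa using hkr) (by simpa using fun h => hmk h.symm) (by simp)
            (by simpa using fun h => hmr h.symm) (by simp) (by simp)
            (φ := fun a => a s) (ψ := fun a => a s) (χ := fun a => a t) (θ := fun a => a t)
            (measurable_pi_apply s) (measurable_pi_apply s) (measurable_pi_apply t)
            (measurable_pi_apply t) (c1I k s) (c1I r s) (c1I m t) (c2I l t)
        rw [h, hmean1 k s, hmean1 r s, hmean1 m t, hmean2 l t,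
          if_neg (by push_neg; exact ⟨hmk, hmr⟩)]
        ring
  set D : ℝ := ∑ s, ∑ t, S1 s t * (μ1 s * μ2 t) with hD
  set M : ℝ := (μ1 ⬝ᵥ μ1) * (μ1 ⬝ᵥ μ2) with hM
  have eM : (∑ s : Fin p, ∑ t : Fin p, μ1 s * μ1 s * (μ1 t * μ2 t)) = M := by
    rw [hM]; simp [dotProduct, Finset.sum_mul_sum]
  -- expectation of a product of two dot products
  have term : ∀ (k r m : Fin n₁) (l : Fin n₂), k ≠ r →
      ∫ ω, (X1 k ω ⬝ᵥ X1 r ω) * (X1 m ω ⬝ᵥ X2 l ω)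
        = (if m = k ∨ m = r then D else 0) + M := by
    intro k r m l hkr
    have hrw : ∫ ω, (X1 k ω ⬝ᵥ X1 r ω) * (X1 m ω ⬝ᵥ X2 l ω)
        = ∫ ω, ∑ s, ∑ t, X1 k ω s * X1 r ω s * (X1 m ω t * X2 l ω t) :=
      integral_congr_ae (ae_of_all _ fun ω => by
        simp only [dotProduct, Finset.sum_mul_sum])
    rw [hrw,
      integral_finset_sum _ fun s _ => integrable_finset_sum _ fun t _ => int4 k r m l s t hkr,
      Finset.sum_congr rfl fun s _ =>
        integral_finset_sum _ fun t _ => int4 k r m l s t hkr,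
      Finset.sum_congr rfl fun s _ => Finset.sum_congr rfl fun t _ => val4 k r m l s t hkr]
    by_cases hc : m = k ∨ m = r
    · simp only [if_pos hc, Finset.sum_add_distrib, eM, ← hD]
    · simp only [if_neg hc, zero_add, eM]
  -- integrability of the 4-index terms of A·B
  have intTerm : ∀ (k r m : Fin n₁) (l : Fin n₂),
      Integrable (fun ω =>
        if k ≠ r then (X1 k ω ⬝ᵥ X1 r ω) * (X1 m ω ⬝ᵥ X2 l ω) else 0) := by
    intro k r m l
    by_cases h : k ≠ r
    · have hint : Integrable (fun ω => ∑ s, ∑ t, X1 k ω s * X1 r ω s * (X1 m ω t * X2 l ω t)) :=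
        integrable_finset_sum _ fun s _ => integrable_finset_sum _ fun t _ => int4 k r m l s t h
      exact hint.congr (ae_of_all _ fun ω => by
        simp only [if_pos h, dotProduct, Finset.sum_mul_sum])
    · simpa [h] using integrable_const (0 : ℝ)
  -- pointwise expansion of A·B
  have hpt : ∀ ω, (∑ k, ∑ r, if k ≠ r then X1 k ω ⬝ᵥ X1 r ω else 0)
        * (∑ m, ∑ l, X1 m ω ⬝ᵥ X2 l ω)
      = ∑ k, ∑ r, ∑ m, ∑ l,
          (if k ≠ r then (X1 k ω ⬝ᵥ X1 r ω) * (X1 m ω ⬝ᵥ X2 l ω) else 0) := by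
    intro ω
    rw [Finset.sum_mul]
    refine Finset.sum_congr rfl fun k _ => ?_
    rw [Finset.sum_mul]
    refine Finset.sum_congr rfl fun r _ => ?_
    by_cases h : k ≠ r
    · simp only [if_pos h, Finset.mul_sum]
    · simp [h]
  have hAB : Integrable (fun ω =>
      (∑ k, ∑ r, if k ≠ r then X1 k ω ⬝ᵥ X1 r ω else 0)
        * (∑ k, ∑ l, X1 k ω ⬝ᵥ X2 l ω)) := by
    have h4 : Integrable (fun ω => ∑ k, ∑ r, ∑ m, ∑ l,
        (if k ≠ r then (X1 k ω ⬝ᵥ X1 r ω) * (X1 m ω ⬝ᵥ X2 l ω) else 0)) :=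
      integrable_finset_sum _ fun k _ => integrable_finset_sum _ fun r _ =>
        integrable_finset_sum _ fun m _ => integrable_finset_sum _ fun l _ => intTerm k r m l
    exact h4.congr (ae_of_all _ fun ω => (hpt ω).symm)
  -- value of each 4-index integral
  have hval4 : ∀ (k r m : Fin n₁) (l : Fin n₂),
      ∫ ω, (if k ≠ r then (X1 k ω ⬝ᵥ X1 r ω) * (X1 m ω ⬝ᵥ X2 l ω) else 0)
        = if k ≠ r then ((if m = k ∨ m = r then D else 0) + M) else 0 := by
    intro k r m l
    by_cases h : k ≠ r
    · simp only [if_pos h]; exact term k r m l h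
    · simp [h]
  -- inner double sum over m, l
  have inner : ∀ (k r : Fin n₁),
      (∑ m : Fin n₁, ∑ l : Fin n₂,
        if k ≠ r then ((if m = k ∨ m = r then D else 0) + M) else 0)
      = if k ≠ r then (n₂ : ℝ) * (2 * D + n₁ * M) else 0 := by
    intro k r
    by_cases h : k ≠ r
    · simp only [if_pos h, Finset.sum_const, Finset.card_univ, Fintype.card_fin, nsmul_eq_mul]
      rw [← Finset.mul_sum]
      rw [Finset.sum_add_distrib]
      have h2 : (∑ m : Fin n₁, if m = k ∨ m = r then D else 0) = 2 * D := by
        have hsplit : ∀ m : Fin n₁, (if m = k ∨ m = r then D else 0)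
            = (if m = k then D else 0) + (if m = r then D else 0) := by
          intro m
          by_cases h1 : m = k
          · subst h1
            have h2 : m ≠ r := h
            simp [h2]
          · by_cases h2 : m = r
            · subst h2; simp [h1]
            · simp [h1, h2]
        rw [Finset.sum_congr rfl fun m _ => hsplit m, Finset.sum_add_distrib]
        simp
        ring
      rw [h2]
      simp [Finset.sum_const, Finset.card_univ]
    · simp [h]
  -- expectation of A·B
  have EAB : ∫ ω, (∑ k, ∑ r, if k ≠ r then X1 k ω ⬝ᵥ X1 r ω else 0)
        * (∑ k, ∑ l, X1 k ω ⬝ᵥ X2 l ω)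
      = ((n₁ : ℝ) ^ 2 - n₁) * ((n₂ : ℝ) * (2 * D + n₁ * M)) := by
    have hrw : ∫ ω, (∑ k, ∑ r, if k ≠ r then X1 k ω ⬝ᵥ X1 r ω else 0)
          * (∑ k, ∑ l, X1 k ω ⬝ᵥ X2 l ω)
        = ∫ ω, ∑ k, ∑ r, ∑ m, ∑ l,
            (if k ≠ r then (X1 k ω ⬝ᵥ X1 r ω) * (X1 m ω ⬝ᵥ X2 l ω) else 0) :=
      integral_congr_ae (ae_of_all _ fun ω => hpt ω)
    rw [hrw]
    rw [integral_finset_sum _ fun k _ => integrable_finset_sum _ fun r _ =>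
      integrable_finset_sum _ fun m _ => integrable_finset_sum _ fun l _ => intTerm k r m l]
    rw [Finset.sum_congr rfl fun k _ => integral_finset_sum _ fun r _ =>
      integrable_finset_sum _ fun m _ => integrable_finset_sum _ fun l _ => intTerm k r m l]
    rw [Finset.sum_congr rfl fun k _ => Finset.sum_congr rfl fun r _ =>
      integral_finset_sum _ fun m _ => integrable_finset_sum _ fun l _ => intTerm k r m l]
    rw [Finset.sum_congr rfl fun k _ => Finset.sum_congr rfl fun r _ =>
      Finset.sum_congr rfl fun m _ =>
        integral_finset_sum _ fun l _ => intTerm k r m l]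
    rw [Finset.sum_congr rfl fun k _ => Finset.sum_congr rfl fun r _ =>
      Finset.sum_congr rfl fun m _ => Finset.sum_congr rfl fun l _ => hval4 k r m l]
    rw [Finset.sum_congr rfl fun k _ => Finset.sum_congr rfl fun r _ => inner k r]
    exact aux_count n₁ _
  -- symmetry of S1 and identification of D
  have hS1symm : ∀ s t, S1 s t = S1 t s := fun s t => by
    rw [← hcov1 ⟨0, by omega⟩ s t, ← hcov1 ⟨0, by omega⟩ t s]
    exact integral_congr_ae (ae_of_all _ fun ω => by ring)
  have hDval : D = μ2 ⬝ᵥ (S1 *ᵥ μ1) := by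
    rw [hD]
    have hsw : ∀ s t : Fin p, S1 s t * (μ1 s * μ2 t) = μ2 t * (S1 t s * μ1 s) := fun s t => by
      rw [hS1symm s t]; ring
    rw [Finset.sum_congr rfl fun s _ => Finset.sum_congr rfl fun t _ => hsw s t,
      Finset.sum_comm]
    simp [dotProduct, mulVec, Finset.mul_sum]
  have hc2 : (2:ℝ) ≤ (n₁:ℝ) := by exact_mod_cast hn₁
  have hc2' : (2:ℝ) ≤ (n₂:ℝ) := by exact_mod_cast hn₂
  constructor
  · rw [aux_cov hA hB hAB, EA, EB, EAB, hM, hDval]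
    have hne1 : (n₁:ℝ) ≠ 0 := ne_of_gt (by linarith)
    have hne1' : (n₁:ℝ) - 1 ≠ 0 := ne_of_gt (by linarith)
    have hne2 : (n₂:ℝ) ≠ 0 := ne_of_gt (by linarith)
    field_simp
    ring
  · -- independence of the two samples gives zero covariance
    set IA : ℝ := ∫ ω', ((n₁ : ℝ) * ((n₁ : ℝ) - 1))⁻¹ *
        (∑ k, ∑ r, (if k ≠ r then X1 k ω' ⬝ᵥ X1 r ω' else 0)) with hIA
    set IC : ℝ := ∫ ω', ((n₂ : ℝ) * ((n₂ : ℝ) - 1))⁻¹ *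
        (∑ k, ∑ r, (if k ≠ r then X2 k ω' ⬝ᵥ X2 r ω' else 0)) with hIC
    set S : Finset (Fin n₁ ⊕ Fin n₂) := (Finset.univ : Finset (Fin n₁)).image Sum.inl with hS
    set T : Finset (Fin n₁ ⊕ Fin n₂) := (Finset.univ : Finset (Fin n₂)).image Sum.inr with hT
    have hmemS : ∀ k : Fin n₁, (Sum.inl k : Fin n₁ ⊕ Fin n₂) ∈ S := by
      intro k; rw [hS]; simp
    have hmemT : ∀ l : Fin n₂, (Sum.inr l : Fin n₁ ⊕ Fin n₂) ∈ T := by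
      intro l; rw [hT]; simp
    have hdisj : Disjoint S T := by
      rw [hS, hT, Finset.disjoint_left]
      rintro a ha hb
      simp only [Finset.mem_image, Finset.mem_univ, true_and] at ha hb
      obtain ⟨x, rfl⟩ := ha
      obtain ⟨y, hy⟩ := hb
      cases hy
    have hfin := hindep.indepFun_finset S T hdisj hmW
    -- the two U-statistics as functions of the separate sample tuples
    have mdotS : ∀ i j : {x // x ∈ S}, Measurable (fun v : {x // x ∈ S} → Fin p → ℝ => v i ⬝ᵥ v j) := by
      intro i j; simp only [dotProduct]
      exact Finset.measurable_sum _ fun s _ => by fun_prop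
    have mdotT : ∀ i j : {x // x ∈ T}, Measurable (fun v : {x // x ∈ T} → Fin p → ℝ => v i ⬝ᵥ v j) := by
      intro i j; simp only [dotProduct]
      exact Finset.measurable_sum _ fun s _ => by fun_prop
    have mG : Measurable (fun v : {x // x ∈ S} → Fin p → ℝ =>
        ((n₁ : ℝ) * ((n₁ : ℝ) - 1))⁻¹ *
          (∑ k, ∑ r, if k ≠ r then v ⟨Sum.inl k, hmemS k⟩ ⬝ᵥ v ⟨Sum.inl r, hmemS r⟩ else 0)
          - IA) := by
      refine Measurable.sub ?_ measurable_const
      refine Measurable.const_mul ?_ _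
      refine Finset.measurable_sum _ fun k _ => Finset.measurable_sum _ fun r _ => ?_
      by_cases h : k ≠ r
      · simpa [h] using mdotS ⟨Sum.inl k, hmemS k⟩ ⟨Sum.inl r, hmemS r⟩
      · simpa [h] using measurable_const
    have mH : Measurable (fun v : {x // x ∈ T} → Fin p → ℝ =>
        ((n₂ : ℝ) * ((n₂ : ℝ) - 1))⁻¹ *
          (∑ k, ∑ r, if k ≠ r then v ⟨Sum.inr k, hmemT k⟩ ⬝ᵥ v ⟨Sum.inr r, hmemT r⟩ else 0)
          - IC) := by
      refine Measurable.sub ?_ measurable_const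
      refine Measurable.const_mul ?_ _
      refine Finset.measurable_sum _ fun k _ => Finset.measurable_sum _ fun r _ => ?_
      by_cases h : k ≠ r
      · simpa [h] using mdotT ⟨Sum.inr k, hmemT k⟩ ⟨Sum.inr r, hmemT r⟩
      · simpa [h] using measurable_const
    have hUV : IndepFun
        (fun ω => ((n₁ : ℝ) * ((n₁ : ℝ) - 1))⁻¹ *
          (∑ k, ∑ r, if k ≠ r then X1 k ω ⬝ᵥ X1 r ω else 0) - IA)
        (fun ω => ((n₂ : ℝ) * ((n₂ : ℝ) - 1))⁻¹ *
          (∑ k, ∑ r, if k ≠ r then X2 k ω ⬝ᵥ X2 r ω else 0) - IC) volume :=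
      hfin.comp mG mH
    have hInt1 : Integrable (fun ω => ((n₁ : ℝ) * ((n₁ : ℝ) - 1))⁻¹ *
        (∑ k, ∑ r, if k ≠ r then X1 k ω ⬝ᵥ X1 r ω else 0) - IA) :=
      (hA.const_mul _).sub (integrable_const _)
    have hInt2 : Integrable (fun ω => ((n₂ : ℝ) * ((n₂ : ℝ) - 1))⁻¹ *
        (∑ k, ∑ r, if k ≠ r then X2 k ω ⬝ᵥ X2 r ω else 0) - IC) :=
      (hC.const_mul _).sub (integrable_const _)
    have hprod : ∫ ω, (((n₁ : ℝ) * ((n₁ : ℝ) - 1))⁻¹ *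
          (∑ k, ∑ r, if k ≠ r then X1 k ω ⬝ᵥ X1 r ω else 0) - IA)
        * (((n₂ : ℝ) * ((n₂ : ℝ) - 1))⁻¹ *
          (∑ k, ∑ r, if k ≠ r then X2 k ω ⬝ᵥ X2 r ω else 0) - IC)
        = (∫ ω, (((n₁ : ℝ) * ((n₁ : ℝ) - 1))⁻¹ *
            (∑ k, ∑ r, if k ≠ r then X1 k ω ⬝ᵥ X1 r ω else 0) - IA))
          * ∫ ω, (((n₂ : ℝ) * ((n₂ : ℝ) - 1))⁻¹ *
            (∑ k, ∑ r, if k ≠ r then X2 k ω ⬝ᵥ X2 r ω else 0) - IC) :=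
      hUV.integral_mul_eq_mul_integral hInt1.aestronglyMeasurable hInt2.aestronglyMeasurable
    have hU0 : ∫ ω, (((n₁ : ℝ) * ((n₁ : ℝ) - 1))⁻¹ *
        (∑ k, ∑ r, if k ≠ r then X1 k ω ⬝ᵥ X1 r ω else 0) - IA) = 0 := by
      rw [integral_sub (hA.const_mul _) (integrable_const _), integral_const]
      simp only [probReal_univ, one_smul]
      rw [hIA, integral_const_mul]
      simp
    rw [hprod, hU0, zero_mul]
end
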